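/- arXiv:1310.7053 — 2 statements merged into one kernel-verified Lean document; each statement's English description precedes it below -/
import Mathlib

section
/- For every positive integer n: ∑_{lcm(d,e)=n} c_d(e) = φ(n), where c_d(e) is the Ramanujan sum, the sum runs over ordered pairs (d,e) with lcm(d,e) = n, and φ is Euler's totient function. -/
/-!
Writing `d = t a`, `e = t b` with `t ∣ gcd(d, e)` turns the sum into
`∑_{t ∣ n} t ∑_{lcm(a,b) = n/t} μ(a)`. The inner sum is `μ(n/t)`: summed over the divisors
of `K` it runs over all pairs of divisors of `K`, giving `τ(K) [K = 1] = [K = 1]`, so Möbius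
inversion identifies it with `μ`. What remains is the classical identity `φ = id ∗ μ`.
-/

open Finset

/-- The Ramanujan sum `c_d(e) = ∑_{t ∣ gcd(e,d)} t·μ(d/t)`. -/
def ramanujanSum (d e : ℕ) : ℤ :=
  ∑ t ∈ (Nat.gcd e d).divisors, (t : ℤ) * ArithmeticFunction.moebius (d / t)

open ArithmeticFunction
open scoped ArithmeticFunction.Moebius

theorem eq_of_sum_divisors_eq {R : Type*} [AddCommGroup R] {f g : ℕ → R}
    (h : ∀ n > 0, ∑ d ∈ n.divisors, f d = ∑ d ∈ n.divisors, g d) {n : ℕ} (hn : 0 < n) :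
    f n = g n := by
  have hf := sum_eq_iff_sum_smul_moebius_eq.mp h n hn
  have hg := (sum_eq_iff_sum_smul_moebius_eq (f := g)).mp (fun n _ => rfl) n hn
  rw [← hf, ← hg]

theorem sum_divisors_moebius (n : ℕ) :
    ∑ d ∈ n.divisors, (μ d : ℤ) = if n = 1 then 1 else 0 := by
  rw [← coe_zeta_mul_apply, coe_zeta_mul_moebius, one_apply]

theorem totient_eq_sum_divisors_mul_moebius (n : ℕ) :
    (n.totient : ℤ) = ∑ d ∈ n.divisors, (d : ℤ) * μ (n / d) := by
  rcases n.eq_zero_or_pos with rfl | hn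
  · simp
  have h := (sum_eq_iff_sum_mul_moebius_eq
    (f := fun d => (d.totient : ℤ)) (g := fun d => (d : ℤ))).mp
    (fun m _ => mod_cast Nat.sum_totient m) n hn
  simp only [Int.cast_id] at h
  rw [← h, Nat.sum_divisorsAntidiagonal' fun a b => μ a * (b : ℤ)]
  exact sum_congr rfl fun _ _ => mul_comm _ _

def lcmPairs (n : ℕ) : Finset (ℕ × ℕ) :=
  (n.divisors ×ˢ n.divisors).filter fun p => Nat.lcm p.1 p.2 = n

theorem mem_lcmPairs {n : ℕ} {p : ℕ × ℕ} :
    p ∈ lcmPairs n ↔ Nat.lcm p.1 p.2 = n ∧ n ≠ 0 := by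
  simp only [lcmPairs, mem_filter, mem_product, Nat.mem_divisors]
  constructor
  · rintro ⟨⟨⟨-, hn⟩, -⟩, hl⟩
    exact ⟨hl, hn⟩
  · rintro ⟨hl, hn⟩
    exact ⟨⟨⟨hl ▸ Nat.dvd_lcm_left _ _, hn⟩,
      ⟨hl ▸ Nat.dvd_lcm_right _ _, hn⟩⟩, hl⟩

theorem sum_divisors_sum_lcmPairs {M : Type*} [AddCommMonoid M] (n : ℕ)
    (f : ℕ × ℕ → M) :
    ∑ k ∈ n.divisors, ∑ p ∈ lcmPairs k, f p = ∑ p ∈ n.divisors ×ˢ n.divisors, f p := by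
  rcases eq_or_ne n 0 with rfl | hn
  · simp
  have hmaps : ∀ p ∈ n.divisors ×ˢ n.divisors, Nat.lcm p.1 p.2 ∈ n.divisors := by
    intro p hp
    simp only [mem_product, Nat.mem_divisors] at hp ⊢
    exact ⟨Nat.lcm_dvd hp.1.1 hp.2.1, hn⟩
  rw [← sum_fiberwise_of_maps_to hmaps]
  refine sum_congr rfl fun k hk => sum_congr ?_ fun _ _ => rfl
  ext p
  have hkn := Nat.mem_divisors.mp hk
  simp only [mem_lcmPairs, mem_filter, mem_product, Nat.mem_divisors]
  constructor
  · rintro ⟨hl, -⟩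
    exact ⟨⟨⟨(hl ▸ Nat.dvd_lcm_left _ _).trans hkn.1, hn⟩,
      ⟨(hl ▸ Nat.dvd_lcm_right _ _).trans hkn.1, hn⟩⟩, hl⟩
  · rintro ⟨-, hl⟩
    exact ⟨hl, ne_zero_of_dvd_ne_zero hn hkn.1⟩

theorem sum_lcmPairs_moebius (n : ℕ) : ∑ p ∈ lcmPairs n, (μ p.1 : ℤ) = μ n := by
  rcases n.eq_zero_or_pos with rfl | hn
  · simp [lcmPairs]
  refine eq_of_sum_divisors_eq (f := fun k => ∑ p ∈ lcmPairs k, (μ p.1 : ℤ)) (fun K _ => ?_) hn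
  simp only [sum_divisors_sum_lcmPairs, sum_product_right, sum_const, sum_divisors_moebius]
  split_ifs with h <;> simp [h]

theorem mul_mem_lcmPairs_mul_iff {t m a b : ℕ} (ht : t ≠ 0) :
    (t * a, t * b) ∈ lcmPairs (t * m) ↔ (a, b) ∈ lcmPairs m := by
  simp only [mem_lcmPairs, Nat.lcm_mul_left, Nat.mul_left_cancel_iff (Nat.pos_of_ne_zero ht),
    mul_ne_zero_iff, ht, ne_eq, not_false_eq_true, true_and]

theorem sum_lcmPairs_mul {M : Type*} [AddCommMonoid M] {t : ℕ} (ht : t ≠ 0) (m : ℕ)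
    (f : ℕ × ℕ → M) :
    ∑ q ∈ lcmPairs m, f (t * q.1, t * q.2) =
      ∑ p ∈ lcmPairs (t * m) with t ∣ Nat.gcd p.1 p.2, f p := by
  refine sum_nbij' (fun q => (t * q.1, t * q.2)) (fun p => (p.1 / t, p.2 / t)) ?_ ?_ ?_ ?_
    fun _ _ => rfl
  · rintro ⟨a, b⟩ hq
    simp only [mem_filter, mul_mem_lcmPairs_mul_iff ht]
    exact ⟨hq, Nat.gcd_mul_left t a b ▸ dvd_mul_right t _⟩
  · rintro ⟨_, _⟩ hp
    simp only [mem_filter, Nat.dvd_gcd_iff] at hp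
    obtain ⟨hp, ⟨a, rfl⟩, ⟨b, rfl⟩⟩ := hp
    simpa [Nat.mul_div_cancel_left _ (Nat.pos_of_ne_zero ht), mul_mem_lcmPairs_mul_iff ht]
      using hp
  · rintro ⟨a, b⟩ -
    simp [Nat.mul_div_cancel_left _ (Nat.pos_of_ne_zero ht)]
  · rintro ⟨_, _⟩ hp
    simp only [mem_filter, Nat.dvd_gcd_iff] at hp
    obtain ⟨-, ⟨a, rfl⟩, ⟨b, rfl⟩⟩ := hp
    simp [Nat.mul_div_cancel_left _ (Nat.pos_of_ne_zero ht)]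

theorem sum_lcmPairs_sum_divisors_gcd {M : Type*} [AddCommMonoid M] (n : ℕ)
    (f : ℕ × ℕ → ℕ → M) :
    ∑ p ∈ lcmPairs n, ∑ t ∈ (Nat.gcd p.1 p.2).divisors, f p t =
      ∑ t ∈ n.divisors, ∑ q ∈ lcmPairs (n / t), f (t * q.1, t * q.2) t := by
  rw [sum_comm' (t' := n.divisors) (s' := fun t => {p ∈ lcmPairs n | t ∣ Nat.gcd p.1 p.2})]
  · refine sum_congr rfl fun t ht => ?_
    obtain ⟨⟨m, rfl⟩, hn⟩ := Nat.mem_divisors.mp ht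
    have ht0 : t ≠ 0 := left_ne_zero_of_mul hn
    rw [Nat.mul_div_cancel_left _ (Nat.pos_of_ne_zero ht0)]
    exact (sum_lcmPairs_mul ht0 m (f · t)).symm
  · intro p t
    simp only [mem_filter, mem_lcmPairs, Nat.mem_divisors]
    constructor
    · rintro ⟨⟨hl, hn⟩, ht, -⟩
      exact ⟨⟨⟨hl, hn⟩, ht⟩,
        ht.trans ((Nat.gcd_dvd_left _ _).trans (hl ▸ Nat.dvd_lcm_left _ _)), hn⟩
    · rintro ⟨⟨⟨hl, hn⟩, ht⟩, -⟩
      refine ⟨⟨hl, hn⟩, ht, ?_⟩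
      exact Nat.gcd_ne_zero_left (ne_zero_of_dvd_ne_zero hn (hl ▸ Nat.dvd_lcm_left _ _))

theorem sum_ramanujan_lcm_convolute_eq_totient_general (n : ℕ) :
    ∑ p ∈ (n.divisors ×ˢ n.divisors).filter
        (fun p => Nat.lcm p.1 p.2 = n), ramanujanSum p.1 p.2
      = (Nat.totient n : ℤ) := by
  calc ∑ p ∈ lcmPairs n, ramanujanSum p.1 p.2
      = ∑ p ∈ lcmPairs n, ∑ t ∈ (Nat.gcd p.1 p.2).divisors, (t : ℤ) * μ (p.1 / t) :=
        sum_congr rfl fun p _ => by rw [ramanujanSum, Nat.gcd_comm]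
    _ = ∑ t ∈ n.divisors, ∑ q ∈ lcmPairs (n / t), (t : ℤ) * μ (t * q.1 / t) :=
        sum_lcmPairs_sum_divisors_gcd n _
    _ = ∑ t ∈ n.divisors, (t : ℤ) * μ (n / t) := by
        refine sum_congr rfl fun t ht => ?_
        have ht0 : 0 < t := Nat.pos_of_mem_divisors ht
        simp only [Nat.mul_div_cancel_left _ ht0, ← mul_sum, sum_lcmPairs_moebius]
    _ = n.totient := (totient_eq_sum_divisors_mul_moebius n).symm

theorem sum_ramanujan_lcm_convolute_eq_totient (n : ℕ) (hn : 0 < n) :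
    ∑ p ∈ (n.divisors ×ˢ n.divisors).filter
        (fun p => Nat.lcm p.1 p.2 = n), ramanujanSum p.1 p.2
      = (Nat.totient n : ℤ) :=
  sum_ramanujan_lcm_convolute_eq_totient_general n
end

section
/- For every positive integer n: ∑_{lcm(d₁,...,dᵣ)=n} φ(d₁)···φ(dᵣ) = φ_r(n), where φ_r is the Jordan totient of order r, i.e., φ_r(n) = n^r·∏_{p∣n}(1 − 1/p^r), and the sum is over ordered r-tuples with lcm equal to n. -/
/-!
Grouping the `r`-tuples of divisors of `m` by their lcm and using `∑_{d ∣ m} φ d = m` in each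
coordinate gives `∑_{d ∣ m} S d = m ^ r`, where `S d` is the sum over the tuples with lcm `d`.
The Jordan totient `J_r = μ * (·) ^ r` has the same divisor sums, so `S = J_r` by Möbius
inversion; since `J_r` is multiplicative with `J_r (p ^ (k + 1)) = p ^ ((k + 1) r) - p ^ (k r)`,
this is `n ^ r ∏_{p ∣ n} (1 - p ^ (-r))`.
-/

open Finset ArithmeticFunction
open scoped ArithmeticFunction.Moebius ArithmeticFunction.zeta

namespace ArithmeticFunction

theorem eq_of_forall_sum_divisors_eq {R : Type*} [AddCommGroup R] {f g : ℕ → R}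
    (h : ∀ n ≠ 0, ∑ d ∈ n.divisors, f d = ∑ d ∈ n.divisors, g d) {n : ℕ}
    (hn : n ≠ 0) : f n = g n :=
  (sum_eq_iff_sum_smul_moebius_eq.mp (fun m hm => h m hm.ne') n hn.pos).symm.trans
    (sum_eq_iff_sum_smul_moebius_eq.mp (fun _ _ => rfl) n hn.pos)

/-- The Möbius inverse of `n ↦ n ^ r`; on prime powers it takes the values
`p ^ (r ν) - p ^ (r (ν - 1))` of the usual definition (`jordanTotient_apply_prime_pow_succ`). -/
def jordanTotient (r : ℕ) : ArithmeticFunction ℤ := μ * (pow r : ArithmeticFunction ℕ)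

theorem isMultiplicative_jordanTotient (r : ℕ) : (jordanTotient r).IsMultiplicative :=
  isMultiplicative_moebius.mul isMultiplicative_pow.natCast

theorem sum_divisors_jordanTotient (r : ℕ) {n : ℕ} (hn : n ≠ 0) :
    ∑ d ∈ n.divisors, jordanTotient r d = (n : ℤ) ^ r := by
  rw [← coe_zeta_mul_apply, jordanTotient, ← mul_assoc, coe_zeta_mul_moebius, one_mul,
    natCoe_apply, pow_apply, if_neg fun h => hn h.2, Nat.cast_pow]

theorem jordanTotient_apply_prime_pow_succ (r : ℕ) {p : ℕ} (hp : p.Prime) (k : ℕ) :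
    jordanTotient r (p ^ (k + 1)) = ((p : ℤ) ^ (k + 1)) ^ r - ((p : ℤ) ^ k) ^ r := by
  have hsucc := sum_divisors_jordanTotient r (pow_ne_zero (k + 1) hp.ne_zero)
  have hk := sum_divisors_jordanTotient r (pow_ne_zero k hp.ne_zero)
  rw [Nat.sum_divisors_prime_pow hp] at hsucc hk
  rw [sum_range_succ, hk] at hsucc
  push_cast at hsucc
  linear_combination hsucc

theorem jordanTotient_eq_mul_prod_primeFactors (r : ℕ) {n : ℕ} (hn : n ≠ 0) :
    (jordanTotient r n : ℚ) =
      (n : ℚ) ^ r * ∏ p ∈ n.primeFactors, (1 - 1 / (p : ℚ) ^ r) := by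
  rw [(isMultiplicative_jordanTotient r).multiplicative_factorization _ hn,
    Nat.prod_factorization_eq_prod_primeFactors, Int.cast_prod]
  conv_rhs => enter [1, 1, 1]; rw [Nat.prod_primeFactors_pow_factorization hn]
  rw [Nat.cast_prod, ← prod_pow, ← prod_mul_distrib]
  refine prod_congr rfl fun p hp => ?_
  have hp' := Nat.prime_of_mem_primeFactors hp
  obtain ⟨k, hk⟩ := Nat.exists_eq_add_one_of_ne_zero
    (hp'.factorization_pos_of_dvd hn (Nat.dvd_of_mem_primeFactors hp)).ne'
  have hp0 : (p : ℚ) ≠ 0 := Nat.cast_ne_zero.mpr hp'.ne_zero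
  rw [hk, jordanTotient_apply_prime_pow_succ r hp']
  push_cast
  field_simp
  ring

end ArithmeticFunction

section LcmTuples

variable (ι : Type*) [Fintype ι] [DecidableEq ι]

def lcmTuples (n : ℕ) : Finset (ι → ℕ) :=
  {t ∈ Fintype.piFinset fun _ : ι => n.divisors | univ.lcm t = n}

variable {ι}

theorem lcmTuples_eq_filter_piFinset_divisors {d m : ℕ} (hdm : d ∣ m) (hm : m ≠ 0) :
    lcmTuples ι d = {t ∈ Fintype.piFinset fun _ : ι => m.divisors | univ.lcm t = d} := by
  ext t
  simp only [lcmTuples, mem_filter, Fintype.mem_piFinset, Nat.mem_divisors, and_congr_left_iff]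
  rintro rfl
  exact forall_congr' fun i => ⟨fun h => ⟨h.1.trans hdm, hm⟩,
    fun _ => ⟨dvd_lcm (mem_univ i), ne_zero_of_dvd_ne_zero hm hdm⟩⟩

theorem sum_divisors_sum_lcmTuples_prod_totient {m : ℕ} (hm : m ≠ 0) :
    ∑ d ∈ m.divisors, ∑ t ∈ lcmTuples ι d, ∏ i, (t i).totient = m ^ Fintype.card ι := by
  calc ∑ d ∈ m.divisors, ∑ t ∈ lcmTuples ι d, ∏ i, (t i).totient
      = ∑ d ∈ m.divisors, ∑ t ∈ Fintype.piFinset (fun _ : ι => m.divisors) with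
          univ.lcm t = d, ∏ i, (t i).totient :=
        sum_congr rfl fun d hd => by
          rw [lcmTuples_eq_filter_piFinset_divisors (Nat.dvd_of_mem_divisors hd) hm]
    _ = ∑ t ∈ Fintype.piFinset fun _ : ι => m.divisors, ∏ i, (t i).totient :=
        sum_fiberwise_of_maps_to (fun t ht => Nat.mem_divisors.mpr
          ⟨lcm_dvd fun i _ => Nat.dvd_of_mem_divisors (Fintype.mem_piFinset.mp ht i), hm⟩) _
    _ = ∏ _i : ι, ∑ d ∈ m.divisors, d.totient := (prod_univ_sum _ _).symm
    _ = m ^ Fintype.card ι := by rw [Nat.sum_totient, prod_const, card_univ]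

theorem sum_lcmTuples_prod_totient_eq_jordanTotient {n : ℕ} (hn : n ≠ 0) :
    ((∑ t ∈ lcmTuples ι n, ∏ i, (t i).totient : ℕ) : ℤ) =
      jordanTotient (Fintype.card ι) n :=
  eq_of_forall_sum_divisors_eq
    (f := fun m => ((∑ t ∈ lcmTuples ι m, ∏ i, (t i).totient : ℕ) : ℤ)) (fun m hm => by
      rw [← Nat.cast_sum, sum_divisors_sum_lcmTuples_prod_totient hm,
        sum_divisors_jordanTotient _ hm, Nat.cast_pow]) hn

end LcmTuples

theorem sum_totient_prod_over_lcm_tuples_eq_jordan_totient (r n : ℕ)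
    (hn : 0 < n) :
    ((∑ d ∈ (Fintype.piFinset fun _ : Fin r => n.divisors).filter
        (fun d => Finset.univ.lcm d = n), ∏ i, Nat.totient (d i) : ℕ) : ℚ)
      = (n : ℚ) ^ r * ∏ p ∈ n.primeFactors, (1 - 1 / (p : ℚ) ^ r) := by
  have h := sum_lcmTuples_prod_totient_eq_jordanTotient (ι := Fin r) hn.ne'
  rw [Fintype.card_fin] at h
  rw [← jordanTotient_eq_mul_prod_primeFactors r hn.ne', ← h, Int.cast_natCast]
  rfl
end
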